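/- arXiv:2305.00977 — 4 statements merged into one kernel-verified Lean document; each statement's English description precedes it below -/
import Mathlib

section
/- Let R_1, ..., R_n be real random variables with 0 ≤ R_j ≤ 1, adapted to a filtration σ_1 ⊆ ... ⊆ σ_n (R_j is σ_j-measurable). Let V̂ = (1/n) Σ_j R_j and V = (1/n) Σ_j E[R_j | σ_{j-1}]. Then for every t > 0, Pr{V > 2V̂ + t} ≤ e^{-nt/e}. -/
/-!
With `c = 1 - e⁻¹` and `E_j = E[R_j | σ_{j-1}]`, the chord of `exp` on `[-1, 0]` gives
`E[e^{-R_j} | σ_{j-1}] ≤ 1 - c E_j ≤ e^{-c E_j}`, so `Z_k = exp (∑_{j ≤ k} (c E_j - R_j))`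
is a supermartingale and `E[Z_n] ≤ 1`. On the event `V > 2 V̂ + t` we have
`c n V - n V̂ ≥ n t / e` because `e⁻¹ ≤ 1/2 ≤ c`, and Markov's inequality for `Z_n`
(a Chernoff bound) gives `e^{-n t / e}`.
-/

open MeasureTheory Finset Real ProbabilityTheory

lemma Real.exp_neg_le_one_sub_mul {x : ℝ} (h0 : 0 ≤ x) (h1 : x ≤ 1) :
    exp (-x) ≤ 1 - (1 - exp (-1)) * x := by
  have h := convexOn_exp.2 (Set.mem_univ 0) (Set.mem_univ (-1)) (sub_nonneg.2 h1) h0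
    (sub_add_cancel 1 x)
  simp only [smul_eq_mul, mul_zero, mul_neg, mul_one, zero_add, exp_zero] at h
  linarith

lemma mul_div_exp_one_le_of_average_gt {n t A B : ℝ} (hn : 0 < n) (ht : 0 < t) (hB : 0 ≤ B)
    (h : 1 / n * A > 2 * (1 / n * B) + t) : n * t / exp 1 ≤ (1 - exp (-1)) * A - B := by
  have hA : 2 * B + n * t < A :=
    calc 2 * B + n * t = n * (2 * (1 / n * B) + t) := by field_simp
      _ < n * (1 / n * A) := mul_lt_mul_of_pos_left h hn
      _ = A := by field_simp
  have hu : exp (-1) < 2⁻¹ := by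
    rw [exp_neg]
    exact inv_strictAnti₀ two_pos exp_one_gt_two
  rw [div_eq_mul_inv, ← exp_neg]
  nlinarith [exp_pos (-1), mul_pos hn ht]

section

variable {Ω : Type*} [m0 : MeasurableSpace Ω] {μ : Measure Ω}

lemma measure_ge_le_exp_neg_of_integral_exp_le_one [IsFiniteMeasure μ] {S : Ω → ℝ}
    (hint : Integrable (fun ω ↦ exp (S ω)) μ) (hS : ∫ ω, exp (S ω) ∂μ ≤ 1) (ε : ℝ) :
    μ {ω | ε ≤ S ω} ≤ ENNReal.ofReal (exp (-ε)) := by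
  have hchernoff := measure_ge_le_exp_mul_mgf ε zero_le_one (by simpa only [one_mul] using hint)
  have hmgf : mgf S μ 1 ≤ 1 := by simpa only [mgf, one_mul] using hS
  rw [← ofReal_measureReal]
  refine ENNReal.ofReal_le_ofReal (hchernoff.trans ?_)
  simpa only [neg_mul, one_mul] using mul_le_of_le_one_right (exp_pos _).le hmgf

lemma condExp_exp_neg_le [IsFiniteMeasure μ] {m : MeasurableSpace Ω} (hm : m ≤ m0)
    {X : Ω → ℝ} (hX : Measurable[m0] X) (h0 : ∀ ω, 0 ≤ X ω) (h1 : ∀ ω, X ω ≤ 1) :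
    μ[fun ω ↦ exp (-X ω) | m] ≤ᵐ[μ] fun ω ↦ exp (-((1 - exp (-1)) * μ[X | m] ω)) := by
  have hXint : Integrable X μ := Integrable.of_bound hX.aestronglyMeasurable 1
    (ae_of_all _ fun ω ↦ by rw [norm_eq_abs, abs_le]; exact ⟨by linarith [h0 ω], h1 ω⟩)
  have hexpint : Integrable (fun ω ↦ exp (-X ω)) μ := Integrable.of_bound
    hX.neg.exp.aestronglyMeasurable 1
    (ae_of_all _ fun ω ↦ by
      rw [norm_of_nonneg (exp_pos _).le, exp_le_one_iff]; linarith [h0 ω])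
  have hchord :
      μ[fun ω ↦ exp (-X ω) | m] ≤ᵐ[μ] μ[(fun _ ↦ (1 : ℝ)) + (-(1 - exp (-1))) • X | m] :=
    condExp_mono hexpint ((integrable_const 1).add (hXint.smul _))
      (ae_of_all _ fun ω ↦ by
        simp only [Pi.add_apply, Pi.smul_apply, smul_eq_mul]
        linarith [exp_neg_le_one_sub_mul (h0 ω) (h1 ω)])
  have hlin : μ[(fun _ ↦ (1 : ℝ)) + (-(1 - exp (-1))) • X | m] =ᵐ[μ]
      (fun _ ↦ 1) + (-(1 - exp (-1))) • μ[X | m] := by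
    filter_upwards [condExp_add (integrable_const 1) (hXint.smul (-(1 - exp (-1)))) m,
      condExp_smul (μ := μ) (-(1 - exp (-1))) X m] with ω hadd hsmul
    rw [hadd, Pi.add_apply, hsmul, condExp_const hm]
    rfl
  filter_upwards [hchord, hlin] with ω hω hlinω
  rw [hlinω] at hω
  refine hω.trans ?_
  simp only [Pi.add_apply, Pi.smul_apply, smul_eq_mul]
  linarith [add_one_le_exp (-((1 - exp (-1)) * μ[X | m] ω))]

lemma integral_mul_le_integral_mul_of_condExp_le {m : MeasurableSpace Ω} (hm : m ≤ m0)
    [SigmaFinite (μ.trim hm)] {f g h : Ω → ℝ} (hf : StronglyMeasurable[m] f)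
    (hf0 : 0 ≤ᵐ[μ] f) (hg : Integrable g μ) (hfg : Integrable (f * g) μ)
    (hfh : Integrable (f * h) μ) (hgh : μ[g | m] ≤ᵐ[μ] h) :
    ∫ ω, (f * g) ω ∂μ ≤ ∫ ω, (f * h) ω ∂μ := by
  have hpull := condExp_mul_of_stronglyMeasurable_left hf hfg hg
  calc ∫ ω, (f * g) ω ∂μ = ∫ ω, (μ[f * g | m]) ω ∂μ := (integral_condExp hm).symm
    _ = ∫ ω, (f * μ[g | m]) ω ∂μ := integral_congr_ae hpull
    _ ≤ ∫ ω, (f * h) ω ∂μ := by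
      refine integral_mono_ae (integrable_condExp.congr hpull) hfh ?_
      filter_upwards [hf0, hgh] with ω hfω hghω
      exact mul_le_mul_of_nonneg_left hghω hfω

noncomputable def expCompensatedSum (μ : Measure Ω) (𝔉 : ℕ → MeasurableSpace Ω)
    (R : ℕ → Ω → ℝ) (n : ℕ) (ω : Ω) : ℝ :=
  exp (∑ j ∈ Icc 1 n, ((1 - exp (-1)) * μ[R j | 𝔉 (j - 1)] ω - R j ω))

variable {𝔉 : ℕ → MeasurableSpace Ω} {R : ℕ → Ω → ℝ}

lemma expCompensatedSum_zero : expCompensatedSum μ 𝔉 R 0 = 1 := by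
  ext ω
  simp [expCompensatedSum]

lemma expCompensatedSum_succ (n : ℕ) :
    expCompensatedSum μ 𝔉 R (n + 1) =
      (expCompensatedSum μ 𝔉 R n * fun ω ↦ exp ((1 - exp (-1)) * μ[R (n + 1) | 𝔉 n] ω)) *
        fun ω ↦ exp (-R (n + 1) ω) := by
  ext ω
  simp only [expCompensatedSum, Pi.mul_apply, ← exp_add, sum_Icc_succ_top (Nat.le_add_left 1 n),
    Nat.add_sub_cancel]
  ring_nf

lemma measurable_expCompensatedSum (hmono : Monotone 𝔉) {n : ℕ}
    (hmeas : ∀ j ∈ Icc 1 n, Measurable[𝔉 j] (R j)) :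
    Measurable[𝔉 n] (expCompensatedSum μ 𝔉 R n) := by
  refine Measurable.exp (Finset.measurable_sum _ fun j hj ↦ ?_)
  have hjn : j ≤ n := (mem_Icc.1 hj).2
  exact (measurable_const.mul (stronglyMeasurable_condExp.measurable.mono
    (hmono ((Nat.sub_le j 1).trans hjn)) le_rfl)).sub ((hmeas j hj).mono (hmono hjn) le_rfl)

lemma integrable_expCompensatedSum [IsFiniteMeasure μ] (hmono : Monotone 𝔉)
    (hle : ∀ j, 𝔉 j ≤ m0) {n : ℕ} (hmeas : ∀ j ∈ Icc 1 n, Measurable[𝔉 j] (R j))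
    (hbd : ∀ j ∈ Icc 1 n, ∀ ω, 0 ≤ R j ω ∧ R j ω ≤ 1) :
    Integrable (expCompensatedSum μ 𝔉 R n) μ := by
  have hcondExp : ∀ᵐ ω ∂μ, ∀ j ∈ Icc 1 n, |μ[R j | 𝔉 (j - 1)] ω| ≤ 1 := by
    refine (Filter.eventually_all_finset _).2 fun j hj ↦ ?_
    exact ae_bdd_abs_condExp_of_ae_bdd_abs
      (ae_of_all _ fun ω ↦ abs_le.2 ⟨by linarith [(hbd j hj ω).1], (hbd j hj ω).2⟩)
  refine Integrable.of_bound
    ((measurable_expCompensatedSum hmono hmeas).mono (hle n) le_rfl).aestronglyMeasurable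
    (exp n) ?_
  filter_upwards [hcondExp] with ω hω
  rw [expCompensatedSum, norm_of_nonneg (exp_pos _).le, exp_le_exp]
  have hsummand : ∀ j ∈ Icc 1 n, (1 - exp (-1)) * μ[R j | 𝔉 (j - 1)] ω - R j ω ≤ 1 := by
    intro j hj
    have := (abs_le.1 (hω j hj)).2
    nlinarith [exp_pos (-1), exp_le_one_iff.2 (neg_nonpos.2 zero_le_one), (hbd j hj ω).1]
  simpa using sum_le_card_nsmul _ _ _ hsummand

lemma integral_expCompensatedSum_le_one [IsProbabilityMeasure μ] (hmono : Monotone 𝔉)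
    (hle : ∀ j, 𝔉 j ≤ m0) (n : ℕ) (hmeas : ∀ j ∈ Icc 1 n, Measurable[𝔉 j] (R j))
    (hbd : ∀ j ∈ Icc 1 n, ∀ ω, 0 ≤ R j ω ∧ R j ω ≤ 1) :
    ∫ ω, expCompensatedSum μ 𝔉 R n ω ∂μ ≤ 1 := by
  induction n with
  | zero => simp [expCompensatedSum_zero]
  | succ n ih =>
    have hsub : Icc 1 n ⊆ Icc 1 (n + 1) := Icc_subset_Icc_right n.le_succ
    have hlast : n + 1 ∈ Icc 1 (n + 1) := mem_Icc.2 ⟨Nat.le_add_left 1 n, le_rfl⟩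
    have hmeas' : ∀ j ∈ Icc 1 n, Measurable[𝔉 j] (R j) := fun j hj ↦ hmeas j (hsub hj)
    have hbd' : ∀ j ∈ Icc 1 n, ∀ ω, 0 ≤ R j ω ∧ R j ω ≤ 1 := fun j hj ↦ hbd j (hsub hj)
    have hZ := integrable_expCompensatedSum (μ := μ) hmono hle hmeas hbd
    rw [expCompensatedSum_succ] at hZ ⊢
    set Z := expCompensatedSum μ 𝔉 R
    set c := 1 - exp (-1)
    set E := μ[R (n + 1) | 𝔉 n]
    have hcancel : ((Z n * fun ω ↦ exp (c * E ω)) * fun ω ↦ exp (-(c * E ω))) = Z n := by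
      ext ω
      simp [mul_assoc, ← exp_add]
    calc ∫ ω, ((Z n * fun ω ↦ exp (c * E ω)) * fun ω ↦ exp (-R (n + 1) ω)) ω ∂μ
        ≤ ∫ ω, ((Z n * fun ω ↦ exp (c * E ω)) * fun ω ↦ exp (-(c * E ω))) ω ∂μ := by
          refine integral_mul_le_integral_mul_of_condExp_le (hle n)
            ((measurable_expCompensatedSum hmono hmeas').mul
              (measurable_const.mul stronglyMeasurable_condExp.measurable).exp).stronglyMeasurable
            (ae_of_all _ fun ω ↦ (mul_pos (exp_pos _) (exp_pos _)).le) ?_ hZ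
            (hcancel.symm ▸ integrable_expCompensatedSum hmono hle hmeas' hbd')
            (condExp_exp_neg_le (hle n) ((hmeas _ hlast).mono (hle _) le_rfl)
              (fun ω ↦ (hbd _ hlast ω).1) fun ω ↦ (hbd _ hlast ω).2)
          refine Integrable.of_bound
            ((hmeas _ hlast).mono (hle _) le_rfl).neg.exp.aestronglyMeasurable 1
            (ae_of_all _ fun ω ↦ ?_)
          rw [norm_of_nonneg (exp_pos _).le, exp_le_one_iff]
          linarith [(hbd _ hlast ω).1]
      _ = ∫ ω, Z n ω ∂μ := by rw [hcancel]
      _ ≤ 1 := ih hmeas' hbd'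

end

theorem martingale_multiplicative_bound
    {Ω : Type*} [m0 : MeasurableSpace Ω] (μ : Measure Ω) [IsProbabilityMeasure μ]
    (n : ℕ) (hn : 0 < n) (𝔉 : ℕ → MeasurableSpace Ω)
    (hmono : Monotone 𝔉) (hle : ∀ j, 𝔉 j ≤ m0)
    (R : ℕ → Ω → ℝ)
    (hmeas : ∀ j ∈ Finset.Icc 1 n, Measurable[𝔉 j] (R j))
    (hbd : ∀ j ∈ Finset.Icc 1 n, ∀ ω, 0 ≤ R j ω ∧ R j ω ≤ 1)
    (t : ℝ) (ht : 0 < t) :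
    μ {ω | (1 / n : ℝ) * ∑ j ∈ Finset.Icc 1 n, (μ[R j | 𝔉 (j - 1)]) ω >
        2 * ((1 / n : ℝ) * ∑ j ∈ Finset.Icc 1 n, R j ω) + t} ≤
      ENNReal.ofReal (Real.exp (-(n * t) / Real.exp 1)) := by
  set S : Ω → ℝ := fun ω ↦ ∑ j ∈ Icc 1 n, ((1 - exp (-1)) * μ[R j | 𝔉 (j - 1)] ω - R j ω)
  have hevent : {ω | (1 / n : ℝ) * ∑ j ∈ Icc 1 n, (μ[R j | 𝔉 (j - 1)]) ω >
      2 * ((1 / n : ℝ) * ∑ j ∈ Icc 1 n, R j ω) + t} ⊆ {ω | n * t / exp 1 ≤ S ω} := by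
    intro ω hω
    simpa only [S, Set.mem_ofPred_eq, sum_sub_distrib, ← mul_sum] using
      mul_div_exp_one_le_of_average_gt (Nat.cast_pos.2 hn) ht
        (sum_nonneg fun j hj ↦ (hbd j hj ω).1) hω
  rw [neg_div]
  exact (measure_mono hevent).trans <| measure_ge_le_exp_neg_of_integral_exp_le_one
    (integrable_expCompensatedSum hmono hle hmeas hbd)
    (integral_expCompensatedSum_le_one hmono hle n hmeas hbd) _
end

section
/- Let R_1, ..., R_n be real random variables with 0 ≤ R_j ≤ 1, adapted to a filtration (σ_j), V̂ = (1/n) Σ_j R_j and V = (1/n) Σ_j E[R_j | σ_{j-1}]. Then for any δ > 0, Pr{V > 2V̂ + e·ln(1/δ)/n} ≤ δ. -/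
open MeasureTheory Finset

/-!
Put `a = 1 / e` and `Y j = 𝔼[R j | 𝔉 (j - 1)]`. Convexity of `exp` on `[0, 1]` gives
`𝔼[exp (-2 a R j) | 𝔉 (j - 1)] ≤ 1 - (1 - exp (-2 a)) Y j ≤ exp (-a Y j)`, because
`a ≤ 1 - exp (-2 a)` for `0 ≤ a ≤ 1 / 2`. Hence the partial products of
`exp (a Y j - 2 a R j)` form a nonnegative supermartingale and the full product has
expectation at most `1`. On the event in question this product is at least `1 / δ`,
so Markov's inequality bounds its probability by `δ`.
-/

namespace Real

lemma le_one_sub_exp_neg_two_mul {a : ℝ} (ha0 : 0 ≤ a) (ha : a ≤ 1 / 2) :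
    a ≤ 1 - exp (-(2 * a)) := by
  have h : exp (-(2 * a)) * (1 + 2 * a) ≤ 1 := by
    calc exp (-(2 * a)) * (1 + 2 * a) ≤ exp (-(2 * a)) * exp (2 * a) := by
          gcongr; linarith [add_one_le_exp (2 * a)]
      _ = 1 := by rw [← exp_add, neg_add_cancel, exp_zero]
  nlinarith [exp_pos (-(2 * a)), mul_nonneg ha0 (by linarith : (0 : ℝ) ≤ 1 - 2 * a)]

lemma exp_neg_mul_le_one_sub_mul (b : ℝ) {x : ℝ} (hx : x ∈ Set.Icc 0 1) :
    exp (-b * x) ≤ 1 - (1 - exp (-b)) * x := by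
  have h := convexOn_exp.2 (Set.mem_univ 0) (Set.mem_univ (-b)) (sub_nonneg.2 hx.2) hx.1
    (sub_add_cancel 1 x)
  simp only [smul_eq_mul, mul_zero, zero_add, exp_zero, mul_one] at h
  calc exp (-b * x) = exp (x * -b) := by rw [mul_comm]
    _ ≤ 1 - x + x * exp (-b) := h
    _ = 1 - (1 - exp (-b)) * x := by ring

end Real

lemma lt_inv_mul_sub_two_mul_of_div_gt {n : ℕ} {c S T L : ℝ} (hc : 0 < c)
    (h : 1 / n * S > 2 * (1 / n * T) + c * L / n) : L < c⁻¹ * (S - 2 * T) := by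
  have hpos : 0 < (S - 2 * T - c * L) / n := by
    linarith [show (S - 2 * T - c * L) / n = 1 / n * S - 2 * (1 / n * T) - c * L / n by ring]
  have hgap : c * L < S - 2 * T :=
    sub_pos.1 ((div_pos_iff.1 hpos).resolve_right fun h' => h'.2.not_ge n.cast_nonneg).1
  rwa [lt_inv_mul_iff₀ hc]

open Real

section
variable {Ω : Type*} {m m0 : MeasurableSpace Ω} {μ : Measure Ω}

lemma condExp_mem_Icc_zero_one {X : Ω → ℝ} (hX : ∀ ω, X ω ∈ Set.Icc 0 1) :
    ∀ᵐ ω ∂μ, μ[X | m] ω ∈ Set.Icc 0 1 := by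
  have habs : ∀ᵐ ω ∂μ, |X ω| ≤ 1 :=
    ae_of_all _ fun ω => abs_le.2 ⟨by linarith [(hX ω).1], (hX ω).2⟩
  filter_upwards [condExp_nonneg (m := m) (ae_of_all μ fun ω => (hX ω).1),
    ae_bdd_abs_condExp_of_ae_bdd_abs (m := m) habs] with ω h0 h1
  exact ⟨h0, (le_abs_self _).trans h1⟩

lemma integrable_of_mem_Icc_zero_one [IsFiniteMeasure μ] {X : Ω → ℝ} (hXm : Measurable X)
    (hX : ∀ ω, X ω ∈ Set.Icc 0 1) : Integrable X μ :=
  .of_bound hXm.aestronglyMeasurable 1 (ae_of_all _ fun ω =>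
    abs_le.2 ⟨by linarith [(hX ω).1], (hX ω).2⟩)

lemma condExp_exp_neg_mul_le [IsFiniteMeasure μ] (hm : m ≤ m0) {X : Ω → ℝ} (hXm : Measurable X)
    (hX : ∀ ω, X ω ∈ Set.Icc 0 1) (b : ℝ) :
    μ[fun ω => exp (-b * X ω) | m] ≤ᵐ[μ] fun ω => exp (-(1 - exp (-b)) * μ[X | m] ω) := by
  set c := 1 - exp (-b)
  have hXi := integrable_of_mem_Icc_zero_one (μ := μ) hXm hX
  have hlin : Integrable (fun ω => 1 - c * X ω) μ := (integrable_const 1).sub (hXi.const_mul c)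
  have hcondLin : μ[fun ω => 1 - c * X ω | m] =ᵐ[μ] fun ω => 1 - c * μ[X | m] ω := by
    filter_upwards [condExp_sub (m := m) (integrable_const (1 : ℝ)) (hXi.const_mul c),
      condExp_smul (μ := μ) c X m] with ω hsub hsmul
    simp only [Pi.sub_apply, Pi.smul_apply, smul_eq_mul, condExp_const hm] at hsub hsmul
    exact hsub.trans (congrArg _ hsmul)
  have hexp_le : (fun ω => exp (-b * X ω)) ≤ᵐ[μ] fun ω => 1 - c * X ω :=
    ae_of_all _ fun ω => exp_neg_mul_le_one_sub_mul b (hX ω)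
  have hexpi : Integrable (fun ω => exp (-b * X ω)) μ :=
    hlin.mono' (by fun_prop) (hexp_le.mono fun ω h => by
      rwa [Real.norm_eq_abs, abs_of_pos (exp_pos _)])
  filter_upwards [condExp_mono hexpi hlin hexp_le, hcondLin] with ω h1 h2
  calc μ[fun ω => exp (-b * X ω) | m] ω ≤ 1 - c * μ[X | m] ω := h1.trans_eq h2
    _ ≤ exp (-c * μ[X | m] ω) := by linarith [add_one_le_exp (-c * μ[X | m] ω)]

lemma norm_exp_mul_condExp_sub_le {X : Ω → ℝ} (hX : ∀ ω, X ω ∈ Set.Icc 0 1) {a : ℝ}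
    (ha : 0 ≤ a) : ∀ᵐ ω ∂μ, ‖exp (a * μ[X | m] ω - 2 * a * X ω)‖ ≤ exp a := by
  filter_upwards [condExp_mem_Icc_zero_one (μ := μ) (m := m) hX] with ω hY
  rw [Real.norm_eq_abs, abs_of_pos (exp_pos _), exp_le_exp]
  nlinarith [(hX ω).1, hY.2]

lemma condExp_exp_mul_condExp_sub_le_one [IsFiniteMeasure μ] (hm : m ≤ m0) {X : Ω → ℝ}
    (hXm : Measurable X) (hX : ∀ ω, X ω ∈ Set.Icc 0 1) {a : ℝ} (ha0 : 0 ≤ a) (ha : a ≤ 1 / 2) :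
    μ[fun ω => exp (a * μ[X | m] ω - 2 * a * X ω) | m] ≤ᵐ[μ] 1 := by
  set Y := μ[X | m]
  have hsplit : (fun ω => exp (a * Y ω - 2 * a * X ω)) =
      (fun ω => exp (a * Y ω)) * fun ω => exp (-(2 * a) * X ω) := by
    ext ω; rw [Pi.mul_apply, ← exp_add]; ring_nf
  have hYm : StronglyMeasurable[m] fun ω => exp (a * Y ω) :=
    (measurable_exp.comp (stronglyMeasurable_condExp.measurable.const_mul a)).stronglyMeasurable
  have hint : Integrable (fun ω => exp (-(2 * a) * X ω)) μ :=
    .of_bound (by fun_prop) 1 (ae_of_all _ fun ω => by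
      rw [Real.norm_eq_abs, abs_of_pos (exp_pos _), exp_le_one_iff]
      nlinarith [(hX ω).1])
  have hprod : Integrable (fun ω => exp (a * Y ω - 2 * a * X ω)) μ :=
    .of_bound ((hYm.mono hm).aestronglyMeasurable.mul hint.1 |>.congr (by rw [hsplit]))
      (exp a) (norm_exp_mul_condExp_sub_le hX ha0)
  rw [hsplit] at hprod ⊢
  filter_upwards [condExp_mul_of_stronglyMeasurable_left hYm hprod hint,
    condExp_exp_neg_mul_le hm hXm hX (2 * a), condExp_mem_Icc_zero_one (μ := μ) (m := m) hX]
    with ω hpull hcond hY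
  have hc : a * Y ω ≤ (1 - exp (-(2 * a))) * Y ω :=
    mul_le_mul_of_nonneg_right (le_one_sub_exp_neg_two_mul ha0 ha) hY.1
  rw [hpull, Pi.mul_apply, Pi.one_apply]
  calc exp (a * Y ω) * μ[fun ω => exp (-(2 * a) * X ω) | m] ω
      ≤ exp (a * Y ω) * exp (-(1 - exp (-(2 * a))) * Y ω) := by gcongr
    _ ≤ exp (a * Y ω) * exp (-(a * Y ω)) := by gcongr; linarith
    _ = 1 := by rw [← exp_add, add_neg_cancel, exp_zero]

lemma integral_mul_le_integral_of_condExp_le_one [IsFiniteMeasure μ] (hm : m ≤ m0)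
    {f g : Ω → ℝ} (hf : StronglyMeasurable[m] f) (hf0 : ∀ ω, 0 ≤ f ω) (hfi : Integrable f μ)
    (hg : Integrable g μ) (hfg : Integrable (fun ω => f ω * g ω) μ) (hcond : μ[g | m] ≤ᵐ[μ] 1) :
    ∫ ω, f ω * g ω ∂μ ≤ ∫ ω, f ω ∂μ := by
  rw [← integral_condExp hm]
  refine integral_mono_ae integrable_condExp hfi ?_
  filter_upwards [condExp_mul_of_stronglyMeasurable_left hf hfg hg, hcond] with ω hpull hle
  exact hpull.trans_le (mul_le_of_le_one_right (hf0 ω) hle)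

lemma integrable_prod_of_ae_norm_le [IsFiniteMeasure μ] {ι : Type*} (s : Finset ι)
    {g : ι → Ω → ℝ} {C : ℝ} (hg : ∀ j ∈ s, AEStronglyMeasurable (g j) μ)
    (hgC : ∀ j ∈ s, ∀ᵐ ω ∂μ, ‖g j ω‖ ≤ C) : Integrable (fun ω => ∏ j ∈ s, g j ω) μ := by
  refine .of_bound (Finset.aestronglyMeasurable_fun_prod s hg) (C ^ s.card) ?_
  filter_upwards [(Filter.eventually_all_finset s).2 hgC] with ω hω
  rw [norm_prod, ← prod_const]
  exact prod_le_prod (fun _ _ => norm_nonneg _) hω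

lemma integral_prod_Icc_le_one [IsProbabilityMeasure μ] {𝔉 : ℕ → MeasurableSpace Ω}
    (hmono : Monotone 𝔉) (hle : ∀ j, 𝔉 j ≤ m0) {g : ℕ → Ω → ℝ} {C : ℝ} (n : ℕ)
    (hg : ∀ j ∈ Icc 1 n, StronglyMeasurable[𝔉 j] (g j)) (hg0 : ∀ j ∈ Icc 1 n, ∀ ω, 0 ≤ g j ω)
    (hgC : ∀ j ∈ Icc 1 n, ∀ᵐ ω ∂μ, ‖g j ω‖ ≤ C)
    (hcond : ∀ j ∈ Icc 1 n, μ[g j | 𝔉 (j - 1)] ≤ᵐ[μ] 1) :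
    ∫ ω, ∏ j ∈ Icc 1 n, g j ω ∂μ ≤ 1 := by
  induction n with
  | zero => simp
  | succ k ih =>
    have hsub : Icc 1 k ⊆ Icc 1 (k + 1) := Icc_subset_Icc_right k.le_succ
    have hk : k + 1 ∈ Icc 1 (k + 1) := right_mem_Icc.2 (by omega)
    have hP : StronglyMeasurable[𝔉 k] fun ω => ∏ j ∈ Icc 1 k, g j ω :=
      Finset.stronglyMeasurable_fun_prod _ fun j hj =>
        (hg j (hsub hj)).mono (hmono (mem_Icc.1 hj).2)
    have hint : ∀ s ⊆ Icc 1 (k + 1), Integrable (fun ω => ∏ j ∈ s, g j ω) μ := fun s hs =>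
      integrable_prod_of_ae_norm_le s
        (fun j hj => ((hg j (hs hj)).mono (hle j)).aestronglyMeasurable) fun j hj => hgC j (hs hj)
    simp only [prod_Icc_succ_top (by omega : 1 ≤ k + 1)]
    refine (integral_mul_le_integral_of_condExp_le_one (hle k) hP
      (fun ω => prod_nonneg fun j hj => hg0 j (hsub hj) ω) (hint _ hsub)
      (by simpa using hint {k + 1} (singleton_subset_iff.2 hk))
      (by simpa only [prod_Icc_succ_top (by omega : 1 ≤ k + 1)] using hint _ subset_rfl)
      (by simpa using hcond _ hk)).trans ?_
    exact ih (fun j hj => hg j (hsub hj)) (fun j hj => hg0 j (hsub hj))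
      (fun j hj => hgC j (hsub hj)) fun j hj => hcond j (hsub hj)

lemma measure_le_ofReal_of_integral_le_one [IsFiniteMeasure μ] {f : Ω → ℝ} (hf0 : 0 ≤ᵐ[μ] f)
    (hfi : Integrable f μ) (hf1 : ∫ ω, f ω ∂μ ≤ 1) {δ : ℝ} (hδ : 0 < δ) :
    μ {ω | 1 / δ ≤ f ω} ≤ ENNReal.ofReal δ := by
  have hmarkov := (mul_meas_ge_le_integral_of_nonneg hf0 hfi (1 / δ)).trans hf1
  rw [one_div_mul_eq_div, div_le_one hδ] at hmarkov
  rwa [ENNReal.le_ofReal_iff_toReal_le (measure_ne_top _ _) hδ.le]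

end

theorem martingale_multiplicative_bound_delta_general
    {Ω : Type*} [m0 : MeasurableSpace Ω] (μ : Measure Ω) [IsProbabilityMeasure μ]
    (n : ℕ) (𝔉 : ℕ → MeasurableSpace Ω)
    (hmono : Monotone 𝔉) (hle : ∀ j, 𝔉 j ≤ m0)
    (R : ℕ → Ω → ℝ)
    (hmeas : ∀ j ∈ Finset.Icc 1 n, Measurable[𝔉 j] (R j))
    (hbd : ∀ j ∈ Finset.Icc 1 n, ∀ ω, 0 ≤ R j ω ∧ R j ω ≤ 1)
    (δ : ℝ) (hδ : 0 < δ) :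
    μ {ω | (1 / n : ℝ) * ∑ j ∈ Finset.Icc 1 n, (μ[R j | 𝔉 (j - 1)]) ω >
        2 * ((1 / n : ℝ) * ∑ j ∈ Finset.Icc 1 n, R j ω) +
          Real.exp 1 * Real.log (1 / δ) / n} ≤ ENNReal.ofReal δ := by
  set a := (exp 1)⁻¹
  have ha0 : 0 ≤ a := inv_nonneg.2 (exp_pos 1).le
  have ha : a ≤ 1 / 2 := by
    rw [one_div]; exact inv_anti₀ two_pos (by linarith [add_one_le_exp 1])
  set g : ℕ → Ω → ℝ := fun j ω => exp (a * μ[R j | 𝔉 (j - 1)] ω - 2 * a * R j ω)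
  have hg : ∀ j ∈ Icc 1 n, StronglyMeasurable[𝔉 j] (g j) := fun j hj =>
    (measurable_exp.comp (((stronglyMeasurable_condExp.measurable.mono (hmono (Nat.sub_le j 1))
      le_rfl).const_mul a).sub ((hmeas j hj).const_mul _))).stronglyMeasurable
  have hgC : ∀ j ∈ Icc 1 n, ∀ᵐ ω ∂μ, ‖g j ω‖ ≤ exp a := fun j hj =>
    norm_exp_mul_condExp_sub_le (hbd j hj) ha0
  have hprod : ∫ ω, ∏ j ∈ Icc 1 n, g j ω ∂μ ≤ 1 :=
    integral_prod_Icc_le_one hmono hle n hg (fun j _ ω => (exp_pos _).le) hgC fun j hj =>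
      condExp_exp_mul_condExp_sub_le_one (hle _) ((hmeas j hj).mono (hle j) le_rfl) (hbd j hj)
        ha0 ha
  refine (measure_mono fun ω hω => ?_).trans (measure_le_ofReal_of_integral_le_one
    (ae_of_all _ fun ω => prod_nonneg fun j _ => (exp_pos _).le)
    (integrable_prod_of_ae_norm_le _
      (fun j hj => ((hg j hj).mono (hle j)).aestronglyMeasurable) hgC) hprod hδ)
  have hprod_eq : ∏ j ∈ Icc 1 n, g j ω =
      exp (a * (∑ j ∈ Icc 1 n, μ[R j | 𝔉 (j - 1)] ω - 2 * ∑ j ∈ Icc 1 n, R j ω)) := by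
    rw [← exp_sum, sum_sub_distrib, ← mul_sum, ← mul_sum]; ring_nf
  show 1 / δ ≤ ∏ j ∈ Icc 1 n, g j ω
  rw [hprod_eq, ← exp_log (one_div_pos.2 hδ), exp_le_exp]
  exact (lt_inv_mul_sub_two_mul_of_div_gt (exp_pos 1) hω).le

theorem martingale_multiplicative_bound_delta
    {Ω : Type*} [m0 : MeasurableSpace Ω] (μ : Measure Ω) [IsProbabilityMeasure μ]
    (n : ℕ) (hn : 0 < n) (𝔉 : ℕ → MeasurableSpace Ω)
    (hmono : Monotone 𝔉) (hle : ∀ j, 𝔉 j ≤ m0)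
    (R : ℕ → Ω → ℝ)
    (hmeas : ∀ j ∈ Finset.Icc 1 n, Measurable[𝔉 j] (R j))
    (hbd : ∀ j ∈ Finset.Icc 1 n, ∀ ω, 0 ≤ R j ω ∧ R j ω ≤ 1)
    (δ : ℝ) (hδ : 0 < δ) :
    μ {ω | (1 / n : ℝ) * ∑ j ∈ Finset.Icc 1 n, (μ[R j | 𝔉 (j - 1)]) ω >
        2 * ((1 / n : ℝ) * ∑ j ∈ Finset.Icc 1 n, R j ω) +
          Real.exp 1 * Real.log (1 / δ) / n} ≤ ENNReal.ofReal δ :=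
  martingale_multiplicative_bound_delta_general (m0 := m0) μ n 𝔉 hmono hle R hmeas hbd δ hδ
end

section
/- Let f be a nonnegative differentiable function on a convex open subset O of a Hilbert space, and suppose that for some γ > 0 and all x, y ∈ O, ‖f'(y) − f'(x)‖ ≤ γ‖y − x‖. Then for all x ∈ O, ‖f'(x)‖ ≤ √(2γ f(x)). -/
/-!
Along the segment from `x` to `x + v`, the directional derivative of `f` exceeds its value at `x`
by at most `γ t ‖v‖²`, which integrates to the descent lemma
`f (x + v) ≤ f x + ⟪f' x, v⟫ + γ/2 ‖v‖²`. Taking `v = -t f' x` and using `f ≥ 0` makes the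
quadratic `f x - t ‖f' x‖² + γ/2 t² ‖f' x‖²` nonnegative for every real `t`, so its discriminant
`‖f' x‖⁴ - 2γ ‖f' x‖² f x` is nonpositive.
-/

open scoped RealInnerProductSpace

section Descent

variable {H : Type*} [NormedAddCommGroup H] [InnerProductSpace ℝ H] {f : H → ℝ}

theorem HasGradientAt.hasDerivAt_comp_add_smul [CompleteSpace H] {x v g : H} {t : ℝ}
    (h : HasGradientAt f g (x + t • v)) :
    HasDerivAt (fun s : ℝ => f (x + s • v)) ⟪g, v⟫ t := by
  have hline : HasDerivAt (fun s : ℝ => x + s • v) v t := by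
    simpa using ((hasDerivAt_id t).smul_const v).const_add x
  exact h.hasFDerivAt.comp_hasDerivAt t hline

theorem inner_gradient_sub_le {f' : H → H} {γ : ℝ}
    (hsmooth : ∀ x y, ‖f' y - f' x‖ ≤ γ * ‖y - x‖) (x v : H) {t : ℝ} (ht : 0 ≤ t) :
    ⟪f' (x + t • v), v⟫ - ⟪f' x, v⟫ ≤ γ * t * ‖v‖ ^ 2 := by
  calc ⟪f' (x + t • v), v⟫ - ⟪f' x, v⟫
      = ⟪f' (x + t • v) - f' x, v⟫ := (inner_sub_left _ _ _).symm
    _ ≤ ‖f' (x + t • v) - f' x‖ * ‖v‖ := real_inner_le_norm _ _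
    _ ≤ γ * ‖(x + t • v) - x‖ * ‖v‖ := by gcongr; exact hsmooth _ _
    _ = γ * t * ‖v‖ ^ 2 := by
      rw [add_sub_cancel_left, norm_smul, Real.norm_of_nonneg ht]
      ring

theorem apply_add_le_of_norm_gradient_sub_le [CompleteSpace H] {f' : H → H} {γ : ℝ}
    (hgrad : ∀ x, HasGradientAt f (f' x) x)
    (hsmooth : ∀ x y, ‖f' y - f' x‖ ≤ γ * ‖y - x‖) (x v : H) :
    f (x + v) ≤ f x + ⟪f' x, v⟫ + γ / 2 * ‖v‖ ^ 2 := by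
  have hderiv (t : ℝ) : HasDerivAt (fun s : ℝ => f (x + s • v)) ⟪f' (x + t • v), v⟫ t :=
    (hgrad _).hasDerivAt_comp_add_smul
  have hbound (t : ℝ) : HasDerivAt (fun s : ℝ => f x + s * ⟪f' x, v⟫ + γ / 2 * s ^ 2 * ‖v‖ ^ 2)
      (⟪f' x, v⟫ + γ * t * ‖v‖ ^ 2) t := by
    refine ((((hasDerivAt_id' t).mul_const ⟪f' x, v⟫).const_add (f x)).add
      (((hasDerivAt_pow 2 t).const_mul (γ / 2)).mul_const (‖v‖ ^ 2))).congr_deriv ?_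
    simp only [one_mul, Nat.cast_ofNat, Nat.add_one_sub_one, pow_one]
    ring
  have key := image_le_of_deriv_right_le_deriv_boundary
    (fun t _ => (hderiv t).continuousAt.continuousWithinAt)
    (fun t _ => (hderiv t).hasDerivWithinAt) (by simp)
    (fun t _ => (hbound t).continuousAt.continuousWithinAt)
    (fun t _ => (hbound t).hasDerivWithinAt)
    (fun t ht => by linarith [inner_gradient_sub_le hsmooth x v ht.1])
    (Set.right_mem_Icc.2 zero_le_one)
  simpa using key

end Descent

theorem grad_le_sqrt_of_smooth_nonneg_general
    {H : Type*} [NormedAddCommGroup H] [InnerProductSpace ℝ H] [CompleteSpace H]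
    (f : H → ℝ) (f' : H → H) (γ : ℝ)
    (hgrad : ∀ x, HasGradientAt f (f' x) x)
    (hnonneg : ∀ x, 0 ≤ f x)
    (hsmooth : ∀ x y, ‖f' y - f' x‖ ≤ γ * ‖y - x‖) :
    ∀ x, ‖f' x‖ ≤ Real.sqrt (2 * γ * f x) := by
  intro x
  have hquad (t : ℝ) : 0 ≤ γ / 2 * ‖f' x‖ ^ 2 * (t * t) + (-‖f' x‖ ^ 2) * t + f x := by
    have h := apply_add_le_of_norm_gradient_sub_le hgrad hsmooth x (-t • f' x)
    rw [inner_smul_right, real_inner_self_eq_norm_sq, norm_smul, Real.norm_eq_abs, mul_pow,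
      sq_abs] at h
    nlinarith [hnonneg (x + -t • f' x)]
  have hdiscr := discrim_le_zero hquad
  rw [discrim] at hdiscr
  rcases (norm_nonneg (f' x)).eq_or_lt with hzero | hpos
  · rw [← hzero]
    exact Real.sqrt_nonneg _
  · refine Real.le_sqrt_of_sq_le (le_of_mul_le_mul_left ?_ (pow_pos hpos 2))
    nlinarith

theorem grad_le_sqrt_of_smooth_nonneg
    {H : Type*} [NormedAddCommGroup H] [InnerProductSpace ℝ H] [CompleteSpace H]
    (f : H → ℝ) (f' : H → H) (γ : ℝ) (hγ : 0 < γ)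
    (hgrad : ∀ x, HasGradientAt f (f' x) x)
    (hnonneg : ∀ x, 0 ≤ f x)
    (hsmooth : ∀ x y, ‖f' y - f' x‖ ≤ γ * ‖y - x‖) :
    ∀ x, ‖f' x‖ ≤ Real.sqrt (2 * γ * f x) :=
  grad_le_sqrt_of_smooth_nonneg_general f f' γ hgrad hnonneg hsmooth
end

section
/- Let X be a random variable with values in a metric space, X_1,...,X_n a (possibly dependent) sample, F the class of all nonnegative L-Lipschitz functions, and t > 0. Conditionally on the sample, sup_{f ∈ F} Pr{f(X) > max_i f(X_i) + t | X_1,...,X_n} = Pr{min_{i=1}^n d(X, X_i) > t/L | X_1,...,X_n}. -/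
/-! Every nonnegative `L`-Lipschitz `f` satisfies `f X - f Xᵢ ≤ L d(X, Xᵢ)`, so exceeding the
largest sample value by `t` forces `X` to lie farther than `t / L` from every sample point. The
bound is attained by `f = L · minᵢ d(·, Xᵢ)`, which vanishes on the sample. -/

open MeasureTheory

section FinsetInfDist

variable {ι α : Type*} [PseudoMetricSpace α] {s : Finset ι} (hs : s.Nonempty) (p : ι → α)

theorem Finset.inf'_dist_nonneg (x : α) : 0 ≤ s.inf' hs (fun i => dist x (p i)) :=
  Finset.le_inf' hs _ fun _ _ => dist_nonneg

theorem Finset.inf'_dist_le_add_dist (x y : α) :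
    s.inf' hs (fun i => dist x (p i)) ≤ s.inf' hs (fun i => dist y (p i)) + dist x y := by
  obtain ⟨i, hi, hmin⟩ := s.exists_mem_eq_inf' hs (fun i => dist y (p i))
  calc s.inf' hs (fun i => dist x (p i)) ≤ dist x (p i) := s.inf'_le _ hi
    _ ≤ dist x y + dist y (p i) := dist_triangle _ _ _
    _ = s.inf' hs (fun i => dist y (p i)) + dist x y := by rw [hmin, add_comm]

theorem Finset.abs_inf'_dist_sub_le (x y : α) :
    |s.inf' hs (fun i => dist x (p i)) - s.inf' hs (fun i => dist y (p i))| ≤ dist x y := by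
  rw [abs_sub_le_iff]
  constructor
  · linarith [s.inf'_dist_le_add_dist hs p x y]
  · linarith [s.inf'_dist_le_add_dist hs p y x, dist_comm x y]

theorem Finset.inf'_dist_eq_zero_of_mem {j : ι} (hj : j ∈ s) :
    s.inf' hs (fun i => dist (p j) (p i)) = 0 :=
  le_antisymm ((s.inf'_le _ hj).trans_eq (dist_self _))
    (s.inf'_dist_nonneg hs p (p j))

theorem Finset.div_lt_inf'_dist_of_sup'_add_lt {f : α → ℝ} {L t : ℝ} (hL : 0 < L)
    (hf : ∀ y z, |f y - f z| ≤ L * dist y z) {x : α}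
    (hx : s.sup' hs (fun i => f (p i)) + t < f x) :
    t / L < s.inf' hs (fun i => dist x (p i)) := by
  refine (Finset.lt_inf'_iff hs).2 fun i hi => ?_
  have hpi : f (p i) ≤ s.sup' hs (fun i => f (p i)) := s.le_sup' (fun i => f (p i)) hi
  have hlip := (abs_le.1 (hf x (p i))).2
  rw [div_lt_iff₀ hL]
  linarith

end FinsetInfDist

theorem sup_lipschitz_exceedance_prob_general {Ω S : Type*} [MeasurableSpace Ω]
    [MetricSpace S]
    (μ : Measure Ω)
    (X : Ω → S)
    (n : ℕ) (hn : n ≠ 0) (Xs : Fin n → S) (L t : ℝ) (hL : 0 < L) :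
    (⨆ f : {f : S → ℝ // (∀ y, 0 ≤ f y) ∧ ∀ y z : S, |f y - f z| ≤ L * dist y z},
        μ {ω | (f : S → ℝ) (X ω) >
          Finset.univ.sup' ⟨⟨0, Nat.pos_of_ne_zero hn⟩, Finset.mem_univ _⟩
            (fun i => (f : S → ℝ) (Xs i)) + t}) =
      μ {ω | Finset.univ.inf' ⟨⟨0, Nat.pos_of_ne_zero hn⟩, Finset.mem_univ _⟩
          (fun i => dist (X ω) (Xs i)) > t / L} := by
  have hs : (Finset.univ : Finset (Fin n)).Nonempty :=
    ⟨⟨0, Nat.pos_of_ne_zero hn⟩, Finset.mem_univ _⟩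
  refine le_antisymm (iSup_le fun f => measure_mono fun ω hω =>
    Finset.div_lt_inf'_dist_of_sup'_add_lt hs Xs hL f.2.2 hω) ?_
  set g : S → ℝ := fun y => L * Finset.univ.inf' hs (fun i => dist y (Xs i))
  have hg_nonneg : ∀ y, 0 ≤ g y := fun y => mul_nonneg hL.le (Finset.inf'_dist_nonneg hs Xs y)
  have hg_lip : ∀ y z, |g y - g z| ≤ L * dist y z := fun y z => by
    simp only [g, ← mul_sub, abs_mul, abs_of_pos hL]
    exact mul_le_mul_of_nonneg_left (Finset.abs_inf'_dist_sub_le hs Xs y z) hL.le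
  have hg_sample : Finset.univ.sup' hs (fun i => g (Xs i)) = 0 := by
    simp only [g, Finset.inf'_dist_eq_zero_of_mem hs Xs (Finset.mem_univ _), mul_zero,
      Finset.sup'_const]
  refine le_of_eq_of_le ?_ (le_iSup (fun f : {f : S → ℝ // _} => μ {ω | f.1 (X ω) > _})
    ⟨g, hg_nonneg, hg_lip⟩)
  congr 1
  ext ω
  simp only [Set.mem_ofPred_eq, hg_sample, zero_add, gt_iff_lt, div_lt_iff₀' hL, g]

theorem sup_lipschitz_exceedance_prob {Ω S : Type*} [MeasurableSpace Ω]
    [MetricSpace S] [MeasurableSpace S] [BorelSpace S]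
    (μ : Measure Ω) [IsProbabilityMeasure μ]
    (X : Ω → S) (hX : Measurable X)
    (n : ℕ) (hn : n ≠ 0) (Xs : Fin n → S) (L t : ℝ) (hL : 0 < L) (ht : 0 < t) :
    (⨆ f : {f : S → ℝ // (∀ y, 0 ≤ f y) ∧ ∀ y z : S, |f y - f z| ≤ L * dist y z},
        μ {ω | (f : S → ℝ) (X ω) >
          Finset.univ.sup' ⟨⟨0, Nat.pos_of_ne_zero hn⟩, Finset.mem_univ _⟩
            (fun i => (f : S → ℝ) (Xs i)) + t}) =
      μ {ω | Finset.univ.inf' ⟨⟨0, Nat.pos_of_ne_zero hn⟩, Finset.mem_univ _⟩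
          (fun i => dist (X ω) (Xs i)) > t / L} :=
  sup_lipschitz_exceedance_prob_general μ X n hn Xs L t hL
end
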